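/- arXiv:0904.1786 — 2 statements merged into one kernel-verified Lean document; each statement's English description precedes it below -/
import Mathlib

section
/- Let W be a finite Coxeter group with set of simple reflections indexed by I, and for J ⊆ I let w₀^J denote the longest element of the standard parabolic subgroup W_J. If (w₀^{J₁} w₀^I) ∗ (w₀^{J₂} w₀^I) = w₀^{J₃} w₀^I for some J₃ ⊆ I, then also (w₀^{J₂} w₀^I) ∗ (w₀^{J₁} w₀^I) = w₀^{J₃} w₀^I. -/
/-!
The map `x ↦ w₀ x⁻¹ w₀` reverses the Demazure product and fixes every `w₀^J w₀`, because `w₀^J`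
and `w₀` are involutions; applied to the hypothesis it gives the claim.

Inversion reverses `∗` because the left and right Demazure actions of simple reflections commute,
which is Deodhar's Property Z. Conjugation by `w₀` preserves `∗` because it preserves length, by
`ℓ (w₀ x) = ℓ w₀ - ℓ x`. Both length facts come from the parity cocycle `η(w, t) ∈ ZMod 2` of the
permutation representation of `W` on `W × ZMod 2` in which `s_i` acts by
`(t, ε) ↦ (s_i t s_i, ε + [t = s_i])` (Björner–Brenti, Thm. 1.4.3): for a reflection `t`,
`η(w, t) = 1` exactly when `ℓ (w t) < ℓ w`.
-/

/-- The Bruhat order on a Coxeter group, via the subword property: `x ≤ y` iff some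
reduced word for `y` has a subword whose product is `x`. -/
def CoxeterSystem.bruhatLE {B W : Type*} [Group W] {M : CoxeterMatrix B}
    (cs : CoxeterSystem M W) (x y : W) : Prop :=
  ∃ ω ω' : List B, cs.IsReduced ω ∧ cs.wordProd ω = y ∧
    List.Sublist ω' ω ∧ cs.wordProd ω' = x

private lemma zmod_two_eq_zero_iff (a : ZMod 2) : a = 0 ↔ a ≠ 1 := by
  revert a; decide

namespace CoxeterSystem

variable {B W : Type*} [Group W] {M : CoxeterMatrix B} (cs : CoxeterSystem M W)

local prefix:100 "s " => cs.simple
local prefix:100 "ℓ " => cs.length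

section Parity

open scoped Classical

noncomputable def parityPerm (i : B) : Equiv.Perm (W × ZMod 2) :=
  Function.Involutive.toPerm (fun p => (s i * p.1 * s i, p.2 + if p.1 = s i then 1 else 0)) <| by
    rintro ⟨t, ε⟩
    have hfix : s i * t * s i = s i ↔ t = s i := by
      constructor
      · intro h
        simpa [mul_assoc, cs.simple_mul_simple_cancel_left] using congrArg (s i * · * s i) h
      · rintro rfl
        rw [cs.simple_mul_simple_self, one_mul]
    ext
    · simp [mul_assoc, cs.simple_mul_simple_cancel_left, cs.simple_mul_simple_self]
    · by_cases h : t = s i <;> simp [hfix, h, add_assoc, ZModModule.add_self]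

lemma parityPerm_apply (i : B) (t : W) (ε : ZMod 2) :
    cs.parityPerm i (t, ε) = (s i * t * s i, ε + if t = s i then 1 else 0) := rfl

lemma parityPerm_mul_pow_apply (i j : B) (k : ℕ) (t : W) (ε : ZMod 2) :
    ((cs.parityPerm i * cs.parityPerm j) ^ k) (t, ε) =
      ((s i * s j) ^ k * t * (s j * s i) ^ k,
        ε + ∑ n ∈ Finset.range (2 * k), if t = (s j * s i) ^ n * s j then 1 else 0) := by
  have hinv : ∀ m : ℕ, ((s i * s j) ^ m)⁻¹ = (s j * s i) ^ m := fun m => by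
    rw [← inv_pow, mul_inv_rev, cs.inv_simple, cs.inv_simple]
  have hcomm : ∀ m : ℕ, s j * (s i * s j) ^ m = (s j * s i) ^ m * s j := fun m =>
    (SemiconjBy.pow_right (by simp only [SemiconjBy, mul_assoc]) m)
  have hconj : ∀ {X t b : W}, X * t * X⁻¹ = b ↔ t = X⁻¹ * b * X := fun {X t b} => by
    constructor <;> rintro rfl <;> group
  induction k with
  | zero => simp
  | succ k ih =>
    rw [pow_succ', Equiv.Perm.mul_apply, ih, Equiv.Perm.mul_apply, parityPerm_apply,
      parityPerm_apply]
    set X := (s i * s j) ^ k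
    have hX : X⁻¹ = (s j * s i) ^ k := hinv k
    have e1 : X * t * (s j * s i) ^ k = s j ↔ t = (s j * s i) ^ (2 * k) * s j := by
      rw [← hX, hconj, hX, mul_assoc, hcomm, ← mul_assoc, ← pow_add, two_mul]
    have e2 : s j * (X * t * (s j * s i) ^ k) * s j = s i ↔
        t = (s j * s i) ^ (2 * k + 1) * s j := by
      have : (s j * X)⁻¹ = (s j * s i) ^ k * s j := by rw [mul_inv_rev, hX, cs.inv_simple]
      rw [← hX, show s j * (X * t * X⁻¹) * s j = (s j * X) * t * (s j * X)⁻¹ by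
        rw [mul_inv_rev, cs.inv_simple]; group, hconj, this, hcomm,
        show 2 * k + 1 = k + 1 + k by ring, pow_add, pow_succ]
      simp only [mul_assoc]
    ext
    · simp only [X, pow_succ' (s i * s j), pow_succ (s j * s i), mul_assoc]
    · simp only [e1, e2, show 2 * (k + 1) = 2 * k + 1 + 1 by ring, Finset.sum_range_succ]
      ring

lemma isLiftable_parityPerm : M.IsLiftable cs.parityPerm := by
  intro i j
  ext ⟨t, ε⟩ : 1
  -- for `k = M i j` the `n`-th and `(n + k)`-th summands agree, so the sum vanishes mod 2
  rw [parityPerm_mul_pow_apply, cs.simple_mul_simple_pow, cs.simple_mul_simple_pow', two_mul,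
    Finset.sum_range_add]
  simp [pow_add, ZModModule.add_self]

noncomputable def parityRep : W →* Equiv.Perm (W × ZMod 2) :=
  cs.lift ⟨cs.parityPerm, cs.isLiftable_parityPerm⟩

noncomputable def inversionParity (w t : W) : ZMod 2 := (cs.parityRep w (t, 0)).2

lemma parityRep_apply (w t : W) (ε : ZMod 2) :
    cs.parityRep w (t, ε) = (w * t * w⁻¹, ε + cs.inversionParity w t) := by
  suffices h : ∃ f : W → ZMod 2, ∀ t ε, cs.parityRep w (t, ε) = (w * t * w⁻¹, ε + f t) by
    obtain ⟨f, hf⟩ := h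
    simp [inversionParity, hf]
  induction w using cs.simple_induction_left with
  | one => exact ⟨0, fun t ε => by simp⟩
  | mul_simple_left w i ih =>
    obtain ⟨f, hf⟩ := ih
    refine ⟨fun t => f t + if w * t * w⁻¹ = s i then 1 else 0, fun t ε => ?_⟩
    rw [map_mul, Equiv.Perm.mul_apply, hf, parityRep, cs.lift_apply_simple, parityPerm_apply,
      mul_inv_rev, cs.inv_simple]
    simp only [mul_assoc, add_assoc]

lemma inversionParity_mul (x y t : W) :
    cs.inversionParity (x * y) t = cs.inversionParity y t + cs.inversionParity x (y * t * y⁻¹) := by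
  simpa [parityRep_apply] using congrArg Prod.snd (cs.parityRep_apply (x * y) t 0).symm

@[simp] lemma inversionParity_one (t : W) : cs.inversionParity 1 t = 0 := by
  simp [inversionParity]

lemma inversionParity_simple (i : B) (t : W) :
    cs.inversionParity (s i) t = if t = s i then 1 else 0 := by
  simp [inversionParity, parityRep, cs.lift_apply_simple, parityPerm_apply]

lemma inversionParity_inv (w t : W) :
    cs.inversionParity w⁻¹ t = cs.inversionParity w (w⁻¹ * t * w) := by
  have h := cs.inversionParity_mul w w⁻¹ t
  rw [mul_inv_cancel, inversionParity_one, inv_inv, eq_comm] at h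
  exact CharTwo.add_eq_zero.mp h

lemma inversionParity_self {t : W} (ht : cs.IsReflection t) : cs.inversionParity t t = 1 := by
  obtain ⟨w, i, rfl⟩ := ht
  -- the contributions of `w⁻¹` and of `w` cancel, leaving that of `s i` at itself
  have h : w⁻¹ * (w * s i * w⁻¹) * w = s i := by group
  rw [inversionParity_mul, inversionParity_mul, inversionParity_inv, inv_inv, h,
    inversionParity_simple, cs.inv_simple, cs.simple_mul_simple_cancel_right, if_pos rfl,
    add_left_comm, CharTwo.add_self_eq_zero, add_zero]

end Parity

theorem simple_induction_left_of_length {p : W → Prop} (w : W) (one : p 1)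
    (mul_simple_left : ∀ (w : W) (i : B), ℓ (s i * w) = ℓ w + 1 → p w → p (s i * w)) : p w := by
  induction hn : ℓ w using Nat.strong_induction_on generalizing w with
  | _ n ih =>
    obtain rfl | hw := eq_or_ne w 1
    · exact one
    obtain ⟨i, hi⟩ := cs.exists_leftDescent_of_ne_one hw
    have hlen := cs.isLeftDescent_iff.mp hi
    have h := mul_simple_left (s i * w) i (by rw [cs.simple_mul_simple_cancel_left]; omega)
      (ih _ (by omega) _ rfl)
    rwa [cs.simple_mul_simple_cancel_left] at h

lemma isRightInversion_of_inversionParity_eq_one {w t : W} (ht : cs.IsReflection t)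
    (h : cs.inversionParity w t = 1) : cs.IsRightInversion w t := by
  induction w using cs.simple_induction_left_of_length with
  | one => simp at h
  | mul_simple_left w i hlen ih =>
    refine ⟨ht, ?_⟩
    rw [inversionParity_mul, inversionParity_simple] at h
    by_cases hw : w * t * w⁻¹ = s i
    · have hwt : s i * w * t = w := by
        rw [← hw, inv_mul_cancel_right, mul_assoc, ht.mul_self, mul_one]
      rw [hwt, hlen]
      omega
    · rw [if_neg hw, add_zero] at h
      calc ℓ (s i * w * t) ≤ ℓ (s i) + ℓ (w * t) := by rw [mul_assoc]; exact cs.length_mul_le _ _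
        _ < ℓ (s i * w) := by rw [cs.length_simple, hlen]; have := (ih h).2; omega

lemma inversionParity_eq_one_iff {w t : W} (ht : cs.IsReflection t) :
    cs.inversionParity w t = 1 ↔ cs.IsRightInversion w t := by
  refine ⟨cs.isRightInversion_of_inversionParity_eq_one ht, fun h => ?_⟩
  by_contra hne
  have h0 := (zmod_two_eq_zero_iff _).mpr hne
  have h1 : cs.inversionParity (w * t) t = 1 := by
    rw [inversionParity_mul, cs.inversionParity_self ht, mul_inv_cancel_right, h0, add_zero]
  exact ht.isRightInversion_mul_left_iff.mp
    (cs.isRightInversion_of_inversionParity_eq_one ht h1) h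

lemma inversionParity_eq_zero_iff {w t : W} (ht : cs.IsReflection t) :
    cs.inversionParity w t = 0 ↔ ¬cs.IsRightInversion w t := by
  rw [zmod_two_eq_zero_iff, ne_eq, cs.inversionParity_eq_one_iff ht]

/-- Deodhar's "Property Z". -/
lemma simple_mul_eq_mul_simple {i j : B} {z : W} (hz : ℓ z < ℓ (s i * z))
    (h : ℓ (s i * (z * s j)) < ℓ (z * s j)) : s i * z = z * s j := by
  have hsi := cs.isReflection_simple i
  have h1 : cs.inversionParity (z * s j)⁻¹ (s i) = 1 := by
    rw [cs.inversionParity_eq_one_iff hsi, isRightInversion_inv_iff]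
    exact ⟨hsi, h⟩
  have h0 : cs.inversionParity z⁻¹ (s i) = 0 := by
    rw [cs.inversionParity_eq_zero_iff hsi, isRightInversion_inv_iff]
    exact fun h' => absurd h'.2 (by omega)
  rw [mul_inv_rev, cs.inv_simple, inversionParity_mul, h0, zero_add, inversionParity_simple,
    inv_inv] at h1
  have h2 : z⁻¹ * s i * z = s j := by by_contra hne; simp [hne] at h1
  rw [← h2]
  group

noncomputable def leftDemazure (i : B) (z : W) : W := if ℓ z < ℓ (s i * z) then s i * z else z

noncomputable def rightDemazure (j : B) (z : W) : W := if ℓ z < ℓ (z * s j) then z * s j else z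

variable {cs} in
lemma leftDemazure_of_lt {i : B} {z : W} (h : ℓ z < ℓ (s i * z)) :
    cs.leftDemazure i z = s i * z := if_pos h

variable {cs} in
lemma rightDemazure_of_lt {j : B} {z : W} (h : ℓ z < ℓ (z * s j)) :
    cs.rightDemazure j z = z * s j := if_pos h

lemma leftDemazure_rightDemazure (i j : B) (z : W) :
    cs.leftDemazure i (cs.rightDemazure j z) = cs.rightDemazure j (cs.leftDemazure i z) := by
  have hlr := cs.length_mul_le (s i * z) (s j)
  have hrl := cs.length_mul_le (s i) (z * s j)
  have hl := cs.length_simple_mul z i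
  have hr := cs.length_mul_simple z j
  have hlr' := cs.length_simple_mul (z * s j) i
  simp only [cs.length_simple, ← mul_assoc] at hlr hrl hlr'
  unfold leftDemazure rightDemazure
  -- Length arithmetic settles every case but `ℓ (s i * z) > ℓ z < ℓ (z * s j)` with
  -- `s i` a left descent of `z * s j`, where Property Z applies.
  split_ifs <;> (try simp only [← mul_assoc] at *) <;> try omega
  exact (cs.simple_mul_eq_mul_simple (by omega) (by rw [← mul_assoc]; omega)).symm

lemma inv_leftDemazure (i : B) (z : W) :
    (cs.leftDemazure i z)⁻¹ = cs.rightDemazure i z⁻¹ := by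
  have h : ℓ (z⁻¹ * s i) = ℓ (s i * z) := by
    rw [← cs.length_inv, mul_inv_rev, inv_inv, cs.inv_simple]
  unfold leftDemazure rightDemazure
  rw [h, cs.length_inv]
  split_ifs
  · rw [mul_inv_rev, cs.inv_simple]
  · rfl

lemma map_leftDemazure {F : Type*} [FunLike F W W] [MonoidHomClass F W W] (φ : F)
    (hφ : ∀ x, ℓ (φ x) = ℓ x) {i j : B} (hij : φ (s i) = s j) (z : W) :
    φ (cs.leftDemazure i z) = cs.leftDemazure j (φ z) := by
  have h : ℓ (s j * φ z) = ℓ (s i * z) := by rw [← hij, ← map_mul, hφ]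
  unfold leftDemazure
  rw [h, hφ]
  split_ifs
  · rw [map_mul, hij]
  · rfl

structure IsDemazureProduct (star : W → W → W) : Prop where
  one_star : ∀ w, star 1 w = w
  simple_star : ∀ i w, star (s i) w = cs.leftDemazure i w
  assoc : ∀ a b c, star (star a b) c = star a (star b c)

namespace IsDemazureProduct

variable {cs} {star : W → W → W} (hD : cs.IsDemazureProduct star)
include hD

lemma simple_mul_star {i : B} {u : W} (h : ℓ (s i * u) = ℓ u + 1) (v : W) :
    star (s i * u) v = cs.leftDemazure i (star u v) := by
  rw [← hD.simple_star, ← hD.assoc, hD.simple_star, leftDemazure_of_lt (by omega)]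

lemma star_one (u : W) : star u 1 = u := by
  induction u using cs.simple_induction_left_of_length with
  | one => exact hD.one_star 1
  | mul_simple_left u i h ih => rw [hD.simple_mul_star h, ih, leftDemazure_of_lt (by omega)]

lemma star_mul_simple {j : B} {v : W} (hv : ℓ (v * s j) = ℓ v + 1) (u : W) :
    star u (v * s j) = cs.rightDemazure j (star u v) := by
  induction u using cs.simple_induction_left_of_length with
  | one => rw [hD.one_star, hD.one_star, rightDemazure_of_lt (by omega)]
  | mul_simple_left u i h ih =>
    rw [hD.simple_mul_star h, hD.simple_mul_star h, ih, leftDemazure_rightDemazure]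

lemma inv_star (u v : W) : (star u v)⁻¹ = star v⁻¹ u⁻¹ := by
  induction u using cs.simple_induction_left_of_length with
  | one => rw [hD.one_star, inv_one, hD.star_one]
  | mul_simple_left u i h ih =>
    have h' : ℓ (u⁻¹ * s i) = ℓ u⁻¹ + 1 := by
      rw [← cs.length_inv, mul_inv_rev, inv_inv, cs.inv_simple, cs.length_inv, h]
    rw [hD.simple_mul_star h, mul_inv_rev, cs.inv_simple, hD.star_mul_simple h', ← ih,
      inv_leftDemazure]

lemma map_star {F : Type*} [FunLike F W W] [MonoidHomClass F W W] (φ : F)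
    (hφ : ∀ x, ℓ (φ x) = ℓ x) (u v : W) : star (φ u) (φ v) = φ (star u v) := by
  induction u using cs.simple_induction_left_of_length with
  | one => rw [map_one, hD.one_star, hD.one_star]
  | mul_simple_left u i h ih =>
    obtain ⟨j, hj⟩ := cs.length_eq_one_iff.mp ((hφ (s i)).trans (cs.length_simple i))
    have h' : ℓ (s j * φ u) = ℓ (φ u) + 1 := by rw [← hj, ← map_mul, hφ, hφ, h]
    rw [map_mul, hj, hD.simple_mul_star h', ih, hD.simple_mul_star h,
      cs.map_leftDemazure φ hφ hj]

end IsDemazureProduct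

def IsLongest (w₀ : W) : Prop := ∀ w, ℓ w ≤ ℓ w₀

namespace IsLongest

variable {cs} {w₀ : W} (hw₀ : cs.IsLongest w₀)
include hw₀

lemma isRightInversion {t : W} (ht : cs.IsReflection t) : cs.IsRightInversion w₀ t :=
  ⟨ht, (hw₀ _).lt_of_ne (ht.length_mul_left_ne w₀)⟩

lemma length_mul (x : W) : ℓ (w₀ * x) + ℓ x = ℓ w₀ := by
  induction x using cs.simple_induction_left_of_length with
  | one => simp
  | mul_simple_left x i h ih =>
    have hsi := cs.isReflection_simple i
    have ht : cs.IsReflection (x⁻¹ * s i * x) := by simpa using hsi.conj x⁻¹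
    have hx : ¬cs.IsRightInversion x (x⁻¹ * s i * x) := fun hx => by
      have := hx.2
      rw [show x * (x⁻¹ * s i * x) = s i * x by group] at this
      omega
    have hinv : cs.IsRightInversion (w₀ * x) (x⁻¹ * s i * x) := by
      rw [← cs.inversionParity_eq_one_iff ht, inversionParity_mul,
        (cs.inversionParity_eq_zero_iff ht).mpr hx, zero_add,
        show x * (x⁻¹ * s i * x) * x⁻¹ = s i by group, cs.inversionParity_eq_one_iff hsi]
      exact hw₀.isRightInversion hsi
    have hlt := hinv.2
    rw [show w₀ * x * (x⁻¹ * s i * x) = w₀ * (s i * x) by group] at hlt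
    have hle := cs.length_mul_le (w₀ * (s i * x)) (s i * x)⁻¹
    rw [mul_inv_cancel_right, cs.length_inv] at hle
    omega

lemma length_conj (x : W) : ℓ (w₀ * x * w₀⁻¹) = ℓ x := by
  have h1 := hw₀.length_mul (x * w₀⁻¹)
  have h2 := hw₀.length_mul x⁻¹
  rw [← cs.length_inv (x * w₀⁻¹), mul_inv_rev, inv_inv, ← mul_assoc] at h1
  rw [cs.length_inv] at h2
  omega

end IsLongest

variable {cs} in
lemma bruhatLE.length_le {x y : W} (h : cs.bruhatLE x y) : ℓ x ≤ ℓ y := by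
  obtain ⟨ω, ω', hω, rfl, hsub, rfl⟩ := h
  calc ℓ (cs.wordProd ω') ≤ ω'.length := cs.length_wordProd_le ω'
    _ ≤ ω.length := hsub.length_le
    _ = ℓ (cs.wordProd ω) := hω.symm

variable {cs} in
lemma bruhatLE.eq_of_length_le {x y : W} (h : cs.bruhatLE x y) (hl : ℓ y ≤ ℓ x) : x = y := by
  obtain ⟨ω, ω', hω, rfl, hsub, rfl⟩ := h
  have : ω.length ≤ ω'.length := hω ▸ hl.trans (cs.length_wordProd_le ω')
  rw [hsub.eq_of_length_le this]

end CoxeterSystem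

theorem demazure_parabolic_comm_general {B W : Type*} [Group W] {M : CoxeterMatrix B} (cs : CoxeterSystem M W)
    (star : W → W → W)
    (hstar_one : ∀ w : W, star 1 w = w)
    (hstar_simple : ∀ (i : B) (w : W), star (cs.simple i) w =
      if cs.length w < cs.length (cs.simple i * w) then cs.simple i * w else w)
    (hstar_assoc : ∀ a b c : W, star (star a b) c = star a (star b c))
    (w0J : Set B → W)
    (hw0J : ∀ J : Set B, w0J J ∈ Subgroup.closure (cs.simple '' J) ∧
      ∀ v ∈ Subgroup.closure (cs.simple '' J), cs.bruhatLE v (w0J J))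
    (J₁ J₂ J₃ : Set B)
    (h : star (w0J J₁ * w0J Set.univ) (w0J J₂ * w0J Set.univ) = w0J J₃ * w0J Set.univ) :
    star (w0J J₂ * w0J Set.univ) (w0J J₁ * w0J Set.univ) = w0J J₃ * w0J Set.univ := by
  have hD : cs.IsDemazureProduct star := ⟨hstar_one, hstar_simple, hstar_assoc⟩
  have hlong : cs.IsLongest (w0J Set.univ) := fun v =>
    ((hw0J Set.univ).2 v (by simp [cs.subgroup_closure_range_simple])).length_le
  have hinv : ∀ J, (w0J J)⁻¹ = w0J J := fun J =>
    ((hw0J J).2 _ (inv_mem (hw0J J).1)).eq_of_length_le (cs.length_inv _).ge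
  have hfix : ∀ J, MulAut.conj (w0J Set.univ) (w0J J * w0J Set.univ)⁻¹ = w0J J * w0J Set.univ := by
    intro J
    rw [MulAut.conj_apply, mul_inv_rev, mul_inv_cancel_left, hinv, hinv]
  calc star (w0J J₂ * w0J Set.univ) (w0J J₁ * w0J Set.univ)
      = star (MulAut.conj (w0J Set.univ) (w0J J₂ * w0J Set.univ)⁻¹)
          (MulAut.conj (w0J Set.univ) (w0J J₁ * w0J Set.univ)⁻¹) := by rw [hfix, hfix]
    _ = MulAut.conj (w0J Set.univ)
          (star (w0J J₁ * w0J Set.univ) (w0J J₂ * w0J Set.univ))⁻¹ := by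
      rw [hD.map_star _ hlong.length_conj, hD.inv_star]
    _ = w0J J₃ * w0J Set.univ := by rw [h, hfix]

/-- If `(w₀^J₁ w₀^I) ∗ (w₀^J₂ w₀^I) = w₀^J₃ w₀^I`, then also
`(w₀^J₂ w₀^I) ∗ (w₀^J₁ w₀^I) = w₀^J₃ w₀^I`. -/
theorem demazure_parabolic_comm {B W : Type*} [Group W] {M : CoxeterMatrix B} (cs : CoxeterSystem M W) [Finite W]
    (star : W → W → W)
    (hstar_one : ∀ w : W, star 1 w = w)
    (hstar_simple : ∀ (i : B) (w : W), star (cs.simple i) w =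
      if cs.length w < cs.length (cs.simple i * w) then cs.simple i * w else w)
    (hstar_assoc : ∀ a b c : W, star (star a b) c = star a (star b c))
    (w0J : Set B → W)
    (hw0J : ∀ J : Set B, w0J J ∈ Subgroup.closure (cs.simple '' J) ∧
      ∀ v ∈ Subgroup.closure (cs.simple '' J), cs.bruhatLE v (w0J J))
    (J₁ J₂ J₃ : Set B)
    (h : star (w0J J₁ * w0J Set.univ) (w0J J₂ * w0J Set.univ) = w0J J₃ * w0J Set.univ) :
    star (w0J J₂ * w0J Set.univ) (w0J J₁ * w0J Set.univ) = w0J J₃ * w0J Set.univ :=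
  demazure_parabolic_comm_general cs star hstar_one hstar_simple hstar_assoc w0J hw0J J₁ J₂ J₃ h
end

section
/- For any subset J ⊆ I of a finite Coxeter system, (w₀^J w₀^I) ▷ w₀^I = w₀^J and (w₀^I w₀^I) ▷ w₀^J = w₀^J, and (w₀^∅ w₀^I) ▷ w₀^J = 1 = (w₀^J w₀^I) ▷ w₀^∅. -/
/-- The set of products `u * y` with `u ≤ x` in the Bruhat order. -/
def CoxeterSystem.triSet {B W : Type*} [Group W] {M : CoxeterMatrix B}
    (cs : CoxeterSystem M W) (x y : W) : Set W :=
  {w | ∃ u : W, cs.bruhatLE u x ∧ w = u * y}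

/-- `m` is the unique minimal element of `S` with respect to the Bruhat order. -/
def CoxeterSystem.IsUniqueBruhatMin {B W : Type*} [Group W] {M : CoxeterMatrix B}
    (cs : CoxeterSystem M W) (S : Set W) (m : W) : Prop :=
  (m ∈ S ∧ ∀ z ∈ S, cs.bruhatLE z m → z = m) ∧
    ∀ z ∈ S, (∀ z' ∈ S, cs.bruhatLE z' z → z' = z) → z = m

/-! Let `w₀ = w₀^I`. Being the Bruhat maximum, `w₀` has maximal length, and then
`ℓ v + ℓ (v * w₀) = ℓ w₀` for every `v` (in particular `w₀² = 1`). So `v ↦ v * w₀` reverses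
lengths, which makes `w₀^J` minimal in `{u * w₀ | u ≤ w₀^J * w₀}`; the other three sets are
`{w₀^J}` (as `w₀ * w₀ = 1`) or contain `1`.

The length identity counts right inversions: `ℓ w` is the number of reflections `t` with
`ℓ (w * t) < ℓ w`, every reflection is a right inversion of `w₀`, and the right inversions of
`v * w₀` are exactly the reflections `t` for which `w₀ * t * w₀⁻¹` is not one of `v`. Both facts
come from Tits' permutation representation of `W` on `W × ZMod 2`: it shows that the parity of
the number of occurrences of `t` in the right inversion sequence of a word only depends on the
product of the word, and that this parity is a cocycle. -/

namespace CoxeterSystem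

open Finset

variable {B W : Type*} [Group W] {M : CoxeterMatrix B} (cs : CoxeterSystem M W)

section ReflectionRepresentation

variable [DecidableEq W]

theorem reflPerm_involutive (i : B) :
    Function.Involutive fun p : W × ZMod 2 ↦
      (cs.simple i * p.1 * cs.simple i, p.2 + if p.1 = cs.simple i then 1 else 0) := by
  rintro ⟨t, ε⟩
  have hfix : cs.simple i * t * cs.simple i = cs.simple i ↔ t = cs.simple i := by
    rw [mul_assoc, mul_eq_left, mul_eq_one_iff_eq_inv, inv_simple]
  refine Prod.ext (by simp [mul_assoc]) ?_
  simp only [hfix]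
  split_ifs <;> simp [add_assoc, CharTwo.add_self_eq_zero]

def reflPerm (i : B) : Equiv.Perm (W × ZMod 2) := (cs.reflPerm_involutive i).toPerm

theorem reflPerm_apply (i : B) (t : W) (ε : ZMod 2) :
    cs.reflPerm i (t, ε) =
      (cs.simple i * t * cs.simple i, ε + if t = cs.simple i then 1 else 0) :=
  rfl

theorem reflPerm_mul_reflPerm_pow_apply (i j : B) (n : ℕ) (t : W) (ε : ZMod 2) :
    ((cs.reflPerm i * cs.reflPerm j) ^ n) (t, ε) =
      (((cs.simple j * cs.simple i) ^ n)⁻¹ * t * (cs.simple j * cs.simple i) ^ n,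
        ε + ∑ r ∈ range (2 * n),
          if t = (cs.simple j * cs.simple i) ^ r * cs.simple j then 1 else 0) := by
  set p := cs.simple j * cs.simple i with hp
  have hp_inv : p⁻¹ = cs.simple i * cs.simple j := by simp [hp]
  induction n generalizing t ε with
  | zero => simp
  | succ n ih =>
    have hsecond : cs.simple j * t * cs.simple j = cs.simple i ↔ t = p ^ 1 * cs.simple j := by
      constructor
      · intro h; simp [hp, ← h, mul_assoc]
      · rintro rfl; simp [hp, mul_assoc]
    have hstep : (cs.reflPerm i * cs.reflPerm j) (t, ε) = (p⁻¹ * t * p,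
        ε + ((if t = p ^ 0 * cs.simple j then 1 else 0) +
          if t = p ^ 1 * cs.simple j then 1 else 0)) := by
      rw [Equiv.Perm.mul_apply, reflPerm_apply, reflPerm_apply, pow_zero, one_mul, add_assoc]
      simp only [hsecond]
      simp [hp, mul_assoc]
    have hshift (r : ℕ) : p⁻¹ * t * p = p ^ r * cs.simple j ↔ t = p ^ (r + 2) * cs.simple j := by
      have hconj : p * (p ^ r * cs.simple j) * p⁻¹ = p ^ (r + 2) * cs.simple j := calc
        _ = p * p ^ r * (cs.simple j * cs.simple i) * cs.simple j := by
          simp only [hp_inv, mul_assoc]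
        _ = p ^ (r + 2) * cs.simple j := by rw [← pow_succ', ← hp, ← pow_succ]
      rw [← eq_mul_inv_iff_mul_eq, inv_mul_eq_iff_eq_mul, ← mul_assoc, hconj]
    rw [pow_succ, Equiv.Perm.mul_apply, hstep, ih]
    simp only [hshift]
    refine Prod.ext (by simp only; group) ?_
    simp only [mul_add, mul_one, sum_range_succ' _ (2 * n + 1), sum_range_succ' _ (2 * n)]
    abel

-- The reflections `(s j * s i) ^ r * s j` are periodic in `r` with period `M i j`, so each one
-- is counted an even number of times.
theorem isLiftable_reflPerm : M.IsLiftable cs.reflPerm := by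
  intro i j
  ext ⟨t, ε⟩ : 1
  have hp : (cs.simple j * cs.simple i) ^ M i j = 1 := cs.simple_mul_simple_pow' i j
  rw [reflPerm_mul_reflPerm_pow_apply, hp, two_mul, sum_range_add]
  simp [pow_add, hp, CharTwo.add_self_eq_zero]

noncomputable def reflRep : W →* Equiv.Perm (W × ZMod 2) :=
  cs.lift ⟨cs.reflPerm, cs.isLiftable_reflPerm⟩

theorem reflRep_wordProd (ω : List B) (t : W) (ε : ZMod 2) :
    cs.reflRep (cs.wordProd ω) (t, ε) =
      (cs.wordProd ω * t * (cs.wordProd ω)⁻¹, ε + ((cs.rightInvSeq ω).count t : ZMod 2)) := by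
  induction ω generalizing ε with
  | nil => simp
  | cons i ω ih =>
    have hcond : cs.wordProd ω * t * (cs.wordProd ω)⁻¹ = cs.simple i ↔
        (cs.wordProd ω)⁻¹ * cs.simple i * cs.wordProd ω = t := by
      constructor <;> intro h <;> rw [← h] <;> group
    rw [wordProd_cons, map_mul, Equiv.Perm.mul_apply, ih, reflRep, lift_apply_simple,
      reflPerm_apply]
    simp only [rightInvSeq, List.count_cons, beq_iff_eq, hcond]
    refine Prod.ext (by simp [mul_assoc]) ?_
    push_cast
    ring

noncomputable def rightInvParity (w t : W) : ZMod 2 := (cs.reflRep w (t, 0)).2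

theorem rightInvParity_wordProd (ω : List B) (t : W) :
    cs.rightInvParity (cs.wordProd ω) t = (cs.rightInvSeq ω).count t := by
  rw [rightInvParity, reflRep_wordProd, zero_add]

theorem reflRep_apply (w t : W) (ε : ZMod 2) :
    cs.reflRep w (t, ε) = (w * t * w⁻¹, ε + cs.rightInvParity w t) := by
  obtain ⟨ω, rfl⟩ := cs.wordProd_surjective w
  rw [reflRep_wordProd, rightInvParity_wordProd]

theorem rightInvParity_one (t : W) : cs.rightInvParity 1 t = 0 := by
  simp [rightInvParity]

theorem rightInvParity_mul (w₁ w₂ t : W) :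
    cs.rightInvParity (w₁ * w₂) t =
      cs.rightInvParity w₂ t + cs.rightInvParity w₁ (w₂ * t * w₂⁻¹) := by
  rw [rightInvParity, map_mul, Equiv.Perm.mul_apply, reflRep_apply, reflRep_apply, zero_add]

theorem rightInvParity_simple_simple (i : B) :
    cs.rightInvParity (cs.simple i) (cs.simple i) = 1 := by
  simpa using cs.rightInvParity_wordProd [i] (cs.simple i)

theorem rightInvParity_self {t : W} (ht : cs.IsReflection t) : cs.rightInvParity t t = 1 := by
  obtain ⟨w, i, rfl⟩ := ht
  have hs : w⁻¹ * (w * cs.simple i * w⁻¹) * w⁻¹⁻¹ = cs.simple i := by group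
  have hcancel := cs.rightInvParity_mul w w⁻¹ (w * cs.simple i * w⁻¹)
  rw [mul_inv_cancel, rightInvParity_one, hs] at hcancel
  rw [rightInvParity_mul, rightInvParity_mul, hs, mul_inv_cancel_right,
    rightInvParity_simple_simple]
  linear_combination -hcancel

theorem rightInvParity_eq_one_iff {w t : W} (ht : cs.IsReflection t) :
    cs.rightInvParity w t = 1 ↔ cs.IsRightInversion w t := by
  have forward (w : W) (h : cs.rightInvParity w t = 1) : cs.IsRightInversion w t := by
    obtain ⟨ω, hω, rfl⟩ := cs.exists_isReduced w
    rw [rightInvParity_wordProd] at h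
    refine cs.isRightInversion_of_mem_rightInvSeq hω (List.count_pos_iff.mp ?_)
    exact Nat.pos_of_ne_zero fun h0 ↦ by simp [h0] at h
  refine ⟨forward w, fun hw ↦ by_contra fun h ↦ ?_⟩
  have h0 : cs.rightInvParity w t = 0 := by
    generalize cs.rightInvParity w t = x at h ⊢
    revert x
    decide
  -- otherwise `t` would be a right inversion of `w * t`, so `ℓ w < ℓ (w * t)`
  have hwt := (forward (w * t) (by
    rw [rightInvParity_mul, mul_inv_cancel_right, rightInvParity_self cs ht, h0, add_zero])).2
  rw [mul_assoc, ht.mul_self, mul_one] at hwt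
  exact lt_asymm hw.2 hwt

theorem mem_rightInvSeq_iff {ω : List B} (hω : cs.IsReduced ω) {t : W} :
    t ∈ cs.rightInvSeq ω ↔ cs.IsRightInversion (cs.wordProd ω) t := by
  refine ⟨cs.isRightInversion_of_mem_rightInvSeq hω, fun h ↦ ?_⟩
  rw [← rightInvParity_eq_one_iff cs h.1, rightInvParity_wordProd] at h
  exact List.count_pos_iff.mp (Nat.pos_of_ne_zero fun h0 ↦ by simp [h0] at h)

theorem isRightInversion_mul_iff {v w t : W} (hw : cs.IsRightInversion w t) :
    cs.IsRightInversion (v * w) t ↔ ¬cs.IsRightInversion v (w * t * w⁻¹) := by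
  have ht := hw.1
  rw [← rightInvParity_eq_one_iff cs ht, ← rightInvParity_eq_one_iff cs (ht.conj w),
    rightInvParity_mul, (rightInvParity_eq_one_iff cs ht).2 hw]
  generalize cs.rightInvParity v (w * t * w⁻¹) = x
  revert x
  decide

end ReflectionRepresentation

theorem ncard_setOf_isRightInversion (w : W) :
    {t | cs.IsRightInversion w t}.ncard = cs.length w := by
  classical
  obtain ⟨ω, hω, rfl⟩ := cs.exists_isReduced w
  have hset : {t | cs.IsRightInversion (cs.wordProd ω) t} =
      ((cs.rightInvSeq ω).toFinset : Set W) := by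
    ext t
    simp [mem_rightInvSeq_iff cs hω]
  rw [hset, Set.ncard_coe_finset, List.toFinset_card_of_nodup hω.nodup_rightInvSeq,
    length_rightInvSeq, hω.eq]

theorem length_add_length_mul_of_forall_length_le [Finite W] {w₀ : W}
    (hmax : ∀ u, cs.length u ≤ cs.length w₀) (v : W) :
    cs.length v + cs.length (v * w₀) = cs.length w₀ := by
  classical
  have hw₀ {t : W} (ht : cs.IsReflection t) : cs.IsRightInversion w₀ t :=
    ⟨ht, (hmax _).lt_of_ne (ht.length_mul_left_ne w₀)⟩
  have hconj : Function.Injective fun t ↦ w₀ * t * w₀⁻¹ := (MulAut.conj w₀).injective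
  -- every reflection `t` is either a right inversion of `x * w₀` or `w₀ * t * w₀⁻¹` is one of `x`
  have hsplit (x : W) : cs.length x + cs.length (x * w₀) = {t | cs.IsReflection t}.ncard := by
    have hpart : {t | cs.IsRightInversion (x * w₀) t} =
        {t | cs.IsReflection t} \ (fun t ↦ w₀ * t * w₀⁻¹) ⁻¹' {t | cs.IsRightInversion x t} := by
      ext t
      by_cases ht : cs.IsReflection t
      · simp [ht, isRightInversion_mul_iff cs (hw₀ ht)]
      · simp [ht, IsRightInversion]
    have hsub : (fun t ↦ w₀ * t * w₀⁻¹) ⁻¹' {t | cs.IsRightInversion x t} ⊆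
        {t | cs.IsReflection t} := fun t h ↦ (cs.isReflection_conj_iff w₀ t).1 h.1
    rw [← ncard_setOf_isRightInversion, ← ncard_setOf_isRightInversion, hpart,
      ← Set.ncard_sdiff_add_ncard_of_subset hsub, add_comm,
      Set.ncard_preimage_of_injective_subset_range hconj]
    intro t _
    exact ⟨w₀⁻¹ * t * w₀, by group⟩
  simpa [hsplit v] using (hsplit 1).symm

theorem mul_self_eq_one_of_forall_length_le [Finite W] {w₀ : W}
    (hmax : ∀ u, cs.length u ≤ cs.length w₀) : w₀ * w₀ = 1 := by
  have := cs.length_add_length_mul_of_forall_length_le hmax w₀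
  exact cs.length_eq_zero_iff.1 (by omega)

theorem bruhatLE_refl (w : W) : cs.bruhatLE w w := by
  obtain ⟨ω, hω, rfl⟩ := cs.exists_isReduced w
  exact ⟨ω, ω, hω, rfl, List.Sublist.refl ω, rfl⟩

theorem one_bruhatLE (w : W) : cs.bruhatLE 1 w := by
  obtain ⟨ω, hω, rfl⟩ := cs.exists_isReduced w
  exact ⟨ω, [], hω, rfl, List.nil_sublist ω, cs.wordProd_nil⟩

theorem length_le_of_bruhatLE {x y : W} (h : cs.bruhatLE x y) : cs.length x ≤ cs.length y := by
  obtain ⟨ω, ω', hω, rfl, hsub, rfl⟩ := h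
  exact (cs.length_wordProd_le ω').trans (hω.eq ▸ hsub.length_le)

theorem eq_of_bruhatLE_of_length_le {x y : W} (h : cs.bruhatLE x y)
    (hl : cs.length y ≤ cs.length x) : x = y := by
  obtain ⟨ω, ω', hω, rfl, hsub, rfl⟩ := h
  refine congrArg cs.wordProd (hsub.eq_of_length (le_antisymm hsub.length_le ?_))
  calc ω.length = cs.length (cs.wordProd ω) := hω.eq.symm
    _ ≤ cs.length (cs.wordProd ω') := hl
    _ ≤ ω'.length := cs.length_wordProd_le ω'

theorem eq_one_of_bruhatLE_one {z : W} (h : cs.bruhatLE z 1) : z = 1 :=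
  cs.eq_of_bruhatLE_of_length_le h (by simp)

theorem triSet_one (y : W) : cs.triSet 1 y = {y} := by
  ext z
  constructor
  · rintro ⟨u, hu, rfl⟩
    rw [cs.eq_one_of_bruhatLE_one hu, one_mul, Set.mem_singleton_iff]
  · rintro rfl
    exact ⟨1, cs.bruhatLE_refl 1, (one_mul z).symm⟩

variable {cs}

theorem IsUniqueBruhatMin.eq_one {S : Set W} {m : W} (h : cs.IsUniqueBruhatMin S m)
    (h1 : (1 : W) ∈ S) : m = 1 :=
  (h.2 1 h1 fun _ _ hz ↦ cs.eq_one_of_bruhatLE_one hz).symm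

theorem IsUniqueBruhatMin.eq_of_triSet_mul [Finite W] {w₀ : W} (hmax : ∀ u, cs.bruhatLE u w₀)
    {v m : W} (h : cs.IsUniqueBruhatMin (cs.triSet (v * w₀) w₀) m) : m = v := by
  have hlen (u : W) : cs.length u ≤ cs.length w₀ := cs.length_le_of_bruhatLE (hmax u)
  have hmem : v ∈ cs.triSet (v * w₀) w₀ :=
    ⟨v * w₀, cs.bruhatLE_refl _, by rw [mul_assoc, cs.mul_self_eq_one_of_forall_length_le hlen,
      mul_one]⟩
  refine (h.2 v hmem ?_).symm
  rintro _ ⟨u, hu, rfl⟩ huv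
  have hu_len := cs.length_le_of_bruhatLE hu
  have huv_len := cs.length_le_of_bruhatLE huv
  have hu_add := cs.length_add_length_mul_of_forall_length_le hlen u
  have hv_add := cs.length_add_length_mul_of_forall_length_le hlen v
  exact cs.eq_of_bruhatLE_of_length_le huv (by omega)

end CoxeterSystem

/-- `(w₀^J w₀^I) ▷ w₀^I = w₀^J`, `(w₀^I w₀^I) ▷ w₀^J = w₀^J`, and
`(w₀^∅ w₀^I) ▷ w₀^J = 1 = (w₀^J w₀^I) ▷ w₀^∅`. -/
theorem tri_extreme_cases {B W : Type*} [Group W] {M : CoxeterMatrix B} (cs : CoxeterSystem M W) [Finite W]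
    (tri : W → W → W)
    (htri : ∀ x y : W, cs.IsUniqueBruhatMin (cs.triSet x y) (tri x y))
    (w0J : Set B → W)
    (hw0J : ∀ J : Set B, w0J J ∈ Subgroup.closure (cs.simple '' J) ∧
      ∀ v ∈ Subgroup.closure (cs.simple '' J), cs.bruhatLE v (w0J J))
    (J : Set B) :
    tri (w0J J * w0J Set.univ) (w0J Set.univ) = w0J J ∧
    tri (w0J Set.univ * w0J Set.univ) (w0J J) = w0J J ∧
    tri (w0J (∅ : Set B) * w0J Set.univ) (w0J J) = 1 ∧
    tri (w0J J * w0J Set.univ) (w0J (∅ : Set B)) = 1 := by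
  have hmax (v : W) : cs.bruhatLE v (w0J Set.univ) :=
    (hw0J Set.univ).2 v (by simp [cs.subgroup_closure_range_simple])
  have hempty : w0J ∅ = 1 := by simpa using (hw0J ∅).1
  have hsq := cs.mul_self_eq_one_of_forall_length_le fun u ↦ cs.length_le_of_bruhatLE (hmax u)
  refine ⟨(htri _ _).eq_of_triSet_mul hmax, ?_, ?_, ?_⟩
  · rw [hsq]
    simpa [cs.triSet_one] using (htri 1 (w0J J)).1.1
  · exact (htri _ _).eq_one ⟨(w0J J)⁻¹, by simpa [hempty] using hmax _, (inv_mul_cancel _).symm⟩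
  · exact (htri _ _).eq_one ⟨1, cs.one_bruhatLE _, by rw [hempty, one_mul]⟩
end
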